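/- arXiv:1602.08602 — 2 statements merged into one kernel-verified Lean document; each statement's English description precedes it below -/
import Mathlib

section
/- If [u, p, σ] with λ ∈ ℝ solves the weak three-field Stokes eigenproblem B_II([u,p,σ],[v,q,τ]) = λ(u,v) for all test triples, then σ = 2μ∇ˢu in L², and [u, p] with the same λ solves the weak two-field Stokes eigenproblem B_I([u,p],[v,q]) = λ(u,v) with viscosity μ, where B_I uses the symmetric-gradient form 2μ(∇ˢu,∇ˢv). -/
open RealInnerProductSpace

/-- If `[u,p,σ]` with `λ` solves the weak three-field Stokes eigenproblem,
then `σ = 2μ∇ˢu` and `[u,p]` with the same `λ` solves the weak two-field Stokes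
eigenproblem in the symmetric-gradient form `2μ(∇ˢu,∇ˢv)`. -/
theorem stmt_2 {V Q T : Type*}
    [NormedAddCommGroup V] [InnerProductSpace ℝ V]
    [NormedAddCommGroup Q] [InnerProductSpace ℝ Q]
    [NormedAddCommGroup T] [InnerProductSpace ℝ T]
    (μ : ℝ) (hμ : 0 < μ)
    (gradS : V →ₗ[ℝ] T) (dvg : V →ₗ[ℝ] Q)
    (u : V) (p : Q) (σ : T) (lam : ℝ)
    (heig : ∀ v : V, ∀ q : Q, ∀ τ : T,
      ⟪gradS v, σ⟫ - ⟪p, dvg v⟫ + ⟪q, dvg u⟫ + (1 / (2 * μ)) * ⟪σ, τ⟫ - ⟪gradS u, τ⟫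
        = lam * ⟪u, v⟫) :
    σ = (2 * μ) • gradS u ∧
      ∀ v : V, ∀ q : Q,
        2 * μ * ⟪gradS u, gradS v⟫ - ⟪p, dvg v⟫ + ⟪q, dvg u⟫ = lam * ⟪u, v⟫ := by

  have hτ : ∀ τ : T, (1 / (2 * μ)) * ⟪σ, τ⟫ - ⟪gradS u, τ⟫ = 0 := by
    intro τ
    have := heig 0 0 τ
    simpa using this
  have hσ : σ = (2 * μ) • gradS u := by
    have h2μ : (2 * μ) ≠ 0 := by positivity
    have key : ∀ τ : T, ⟪(1 / (2 * μ)) • σ - gradS u, τ⟫ = 0 := by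
      intro τ
      rw [inner_sub_left, real_inner_smul_left]
      linarith [hτ τ]
    have hz : (1 / (2 * μ)) • σ - gradS u = 0 :=
      inner_self_eq_zero.mp (key _)
    have : (1 / (2 * μ)) • σ = gradS u := by
      rw [sub_eq_zero] at hz; exact hz
    calc σ = (2 * μ) • ((1 / (2 * μ)) • σ) := by
            rw [smul_smul, mul_one_div, div_self h2μ, one_smul]
      _ = (2 * μ) • gradS u := by rw [this]
  refine ⟨hσ, fun v q => ?_⟩
  have := heig v q 0
  simp only [inner_zero_right, mul_zero, sub_zero, add_zero] at this
  rw [hσ, real_inner_smul_right, real_inner_comm] at this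
  linarith
end

section
/- (Quantitative consequence of operator-norm convergence on eigenfunctions) Let T, T_h be compact operators on a Hilbert space X, ν a simple nonzero eigenvalue of T with unit eigenvector x, and suppose ‖T − T_h‖_{L(X)} is small enough that T_h has a simple eigenvalue ν_h near ν with unit eigenvector x_h. Then, for a suitable choice of sign of x_h, ‖x − x_h‖_X ≤ C ‖(T − T_h)x‖_X for a constant C depending only on the separation of ν from the rest of the spectrum of T. -/
open RealInnerProductSpace



/-- A symmetric bounded-below operator on a real Hilbert space is a unit. -/
lemma isUnit_of_symmetric_boundedBelow {H : Type*} [NormedAddCommGroup H]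
    [InnerProductSpace ℝ H] [CompleteSpace H] {A : H →L[ℝ] H}
    (hsym : ∀ u v : H, ⟪A u, v⟫ = ⟪u, A v⟫) {c : ℝ} (hc : 0 < c)
    (hb : ∀ u : H, c * ‖u‖ ≤ ‖A u‖) : IsUnit A := by
  have hanti : AntilipschitzWith (⟨c, hc.le⟩ : NNReal)⁻¹ A := by
    refine AddMonoidHomClass.antilipschitz_of_bound A fun u => ?_
    show ‖u‖ ≤ c⁻¹ * ‖A u‖
    rw [inv_mul_eq_div, le_div_iff₀ hc, mul_comm]
    exact hb u
  have hclosed : IsClosed (Set.range A) := hanti.isClosed_range A.uniformContinuous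
  have hker : A.ker = ⊥ := by
    ext u
    simp only [LinearMap.mem_ker, ContinuousLinearMap.coe_coe, Submodule.mem_bot]
    constructor
    · intro hu
      have h1 := hb u
      rw [hu, norm_zero] at h1
      have h2 : ‖u‖ ≤ 0 := by nlinarith [norm_nonneg u]
      simpa using le_antisymm h2 (norm_nonneg u)
    · rintro rfl; simp
  have hrange_closed : IsClosed ((A.range : Submodule ℝ H) : Set H) := by
    simpa [LinearMap.coe_range] using hclosed
  haveI : CompleteSpace (A.range : Submodule ℝ H) :=
    hrange_closed.completeSpace_coe
  have hrange : A.range = ⊤ := by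
    rw [← Submodule.orthogonal_eq_bot_iff]
    ext v
    simp only [Submodule.mem_orthogonal, Submodule.mem_bot]
    constructor
    · intro hv
      have hAv : A v = 0 := by
        have h0 : ⟪A (A v), v⟫ = 0 := hv (A (A v)) ⟨A v, rfl⟩
        rw [hsym] at h0
        have : ⟪A v, A v⟫ = 0 := by rwa [real_inner_comm] at h0
        exact inner_self_eq_zero.mp this
      have h1 := hb v
      rw [hAv, norm_zero] at h1
      have h2 : ‖v‖ ≤ 0 := by nlinarith [norm_nonneg v]
      simpa using le_antisymm h2 (norm_nonneg v)
    · rintro rfl u _; exact inner_zero_right u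
  let e := ContinuousLinearEquiv.ofBijective A hker hrange
  refine isUnit_iff_exists.mpr ⟨(e.symm : H →L[ℝ] H), ?_, ?_⟩
  · ext v
    have h1 : A ((e.symm : H →L[ℝ] H) v) = e (e.symm v) := rfl
    simpa [ContinuousLinearMap.mul_apply] using h1.trans (e.apply_symm_apply v)
  · ext v
    have h1 : A v = e v := rfl
    simp only [ContinuousLinearMap.mul_apply, ContinuousLinearMap.one_apply,
      ContinuousLinearMap.coe_coe, h1]
    exact e.symm_apply_apply v



set_option maxHeartbeats 1600000 in
lemma inner_nonneg_of_spectrum_nonneg {H : Type*} [NormedAddCommGroup H]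
    [InnerProductSpace ℝ H] [CompleteSpace H] {B : H →L[ℝ] H}
    (hsym : ∀ u v : H, ⟪B u, v⟫ = ⟪u, B v⟫)
    (hspec : ∀ t ∈ spectrum ℝ B, 0 ≤ t) : ∀ v : H, 0 ≤ ⟪B v, v⟫ := by
  by_contra hcon
  push_neg at hcon
  obtain ⟨v, hv⟩ := hcon
  have hv0 : v ≠ 0 := by rintro rfl; simp at hv
  have hnv : 0 < ‖v‖ := norm_pos_iff.mpr hv0
  set S : Set ℝ := (fun u : H => ⟪B u, u⟫) '' {u : H | ‖u‖ = 1} with hS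
  have hbdd : BddBelow S := by
    refine ⟨-‖B‖, ?_⟩
    rintro s ⟨u, hu, rfl⟩
    simp only [Set.mem_setOf_eq] at hu
    have h1 : |⟪B u, u⟫| ≤ ‖B u‖ * ‖u‖ := abs_real_inner_le_norm _ _
    have h2 : ‖B u‖ ≤ ‖B‖ * ‖u‖ := B.le_opNorm u
    rw [hu] at h1 h2
    have := abs_le.mp h1
    nlinarith
  obtain ⟨u₀, hu₀⟩ : ∃ u₀ : H, u₀ = ‖v‖⁻¹ • v := ⟨_, rfl⟩
  have hu₀n : ‖u₀‖ = 1 := by rw [hu₀]; exact norm_smul_inv_norm hv0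
  have hBu₀ : ⟪B u₀, u₀⟫ = ‖v‖⁻¹ ^ 2 * ⟪B v, v⟫ := by
    simp only [hu₀, map_smul, real_inner_smul_left, real_inner_smul_right]
    ring
  have hu₀neg : ⟪B u₀, u₀⟫ < 0 := by
    rw [hBu₀]
    have : 0 < ‖v‖⁻¹ ^ 2 := by positivity
    nlinarith
  have hne : S.Nonempty := ⟨⟪B u₀, u₀⟫, ⟨u₀, hu₀n, rfl⟩⟩
  obtain ⟨m, hm⟩ : ∃ m : ℝ, m = sInf S := ⟨_, rfl⟩
  have hmem : ∀ u : H, ‖u‖ = 1 → m ≤ ⟪B u, u⟫ := by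
    intro u hu
    rw [hm]
    exact csInf_le hbdd ⟨u, hu, rfl⟩
  have hm0 : m < 0 := lt_of_le_of_lt (hmem u₀ hu₀n) hu₀neg
  have hms : m ∉ spectrum ℝ B := fun hmm => absurd (hspec m hmm) (not_le.mpr hm0)
  rw [spectrum.notMem_iff] at hms
  obtain ⟨B', hB'⟩ : ∃ B' : H →L[ℝ] H, B' = B - m • (1 : H →L[ℝ] H) := ⟨_, rfl⟩
  have hB'eq : algebraMap ℝ (H →L[ℝ] H) m - B = -B' := by
    rw [Algebra.algebraMap_eq_smul_one, hB']
    abel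
  rw [hB'eq] at hms
  have hunit : IsUnit B' := by
    have := hms.neg
    rwa [neg_neg] at this
  obtain ⟨U, hU⟩ := hunit
  obtain ⟨Cop, hCop⟩ : ∃ Cop : H →L[ℝ] H, Cop = ↑U⁻¹ := ⟨_, rfl⟩
  have hCB : ∀ u : H, Cop (B' u) = u := by
    intro u
    have h1 : (↑U⁻¹ * ↑U : H →L[ℝ] H) u = u := by rw [U.inv_mul]; rfl
    rw [ContinuousLinearMap.mul_apply, hU] at h1
    rw [hCop]
    exact h1
  have hB'app : ∀ u : H, B' u = B u - m • u := by
    intro u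
    simp [hB', ContinuousLinearMap.sub_apply, ContinuousLinearMap.smul_apply,
      ContinuousLinearMap.one_apply]
  have hB'inner : ∀ u : H, ⟪B' u, u⟫ = ⟪B u, u⟫ - m * ‖u‖ ^ 2 := by
    intro u
    rw [hB'app, inner_sub_left, real_inner_smul_left, real_inner_self_eq_norm_sq]
  have hB'nonneg : ∀ u : H, 0 ≤ ⟪B' u, u⟫ := by
    intro u
    rcases eq_or_ne u 0 with rfl | hu0
    · simp
    · have hnu : 0 < ‖u‖ := norm_pos_iff.mpr hu0
      obtain ⟨w, hw⟩ : ∃ w : H, w = ‖u‖⁻¹ • u := ⟨_, rfl⟩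
      have hwn : ‖w‖ = 1 := by rw [hw]; exact norm_smul_inv_norm hu0
      have hmw : m ≤ ⟪B w, w⟫ := hmem w hwn
      have hBw : ⟪B w, w⟫ = ‖u‖⁻¹ ^ 2 * ⟪B u, u⟫ := by
        simp only [hw, map_smul, real_inner_smul_left, real_inner_smul_right]
        ring
      rw [hB'inner]
      rw [hBw] at hmw
      have h3 : m * ‖u‖ ^ 2 ≤ ⟪B u, u⟫ := by
        have h4 := mul_le_mul_of_nonneg_left hmw (by positivity : (0:ℝ) ≤ ‖u‖ ^ 2)
        calc m * ‖u‖ ^ 2 = ‖u‖ ^ 2 * m := by ring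
        _ ≤ ‖u‖ ^ 2 * (‖u‖⁻¹ ^ 2 * ⟪B u, u⟫) := h4
        _ = ⟪B u, u⟫ := by field_simp
      linarith
  have hB'sym : ∀ u w : H, ⟪B' u, w⟫ = ⟪u, B' w⟫ := by
    intro u w
    simp only [hB'app, inner_sub_left, inner_sub_right, real_inner_smul_left,
      real_inner_smul_right, hsym]
  obtain ⟨M, hM⟩ : ∃ M : ℝ, M = ‖B'‖ + 1 := ⟨_, rfl⟩
  have hM0 : 0 < M := by rw [hM]; positivity
  have hMne : M ≠ 0 := ne_of_gt hM0
  have genCS : ∀ u : H, ‖B' u‖ ^ 2 ≤ M * ⟪B' u, u⟫ := by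
    intro u
    obtain ⟨z, hz⟩ : ∃ z : H, z = B' u := ⟨_, rfl⟩
    have ht0 : 0 ≤ ⟪z, u⟫ := by
      have := hB'nonneg u
      rwa [← hz] at this
    have key := hB'nonneg (u + (-(1/M)) • z)
    have hexp : B' (u + (-(1/M)) • z) = z + (-(1/M)) • B' z := by
      rw [map_add, map_smul, ← hz]
    rw [hexp] at key
    have e2 : ⟪B' z, u⟫ = ‖z‖ ^ 2 := by
      rw [hB'sym z u, ← hz, real_inner_self_eq_norm_sq]
    have e3 : ⟪z, z⟫ = ‖z‖ ^ 2 := real_inner_self_eq_norm_sq z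
    have hzz : ⟪B' z, z⟫ ≤ M * ‖z‖ ^ 2 := by
      have h1 : |⟪B' z, z⟫| ≤ ‖B' z‖ * ‖z‖ := abs_real_inner_le_norm _ _
      have h2 : ‖B' z‖ ≤ ‖B'‖ * ‖z‖ := B'.le_opNorm z
      have h3 := abs_le.mp h1
      have h4 : (0:ℝ) ≤ ‖z‖ := norm_nonneg z
      rw [hM]
      nlinarith
    simp only [inner_add_left, inner_add_right, real_inner_smul_left,
      real_inner_smul_right, e2, e3] at key
    have k1 : 0 ≤ M * ⟪z, u⟫ - 2 * ‖z‖ ^ 2 + (1/M) * ⟪B' z, z⟫ := by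
      have h5 := mul_nonneg hM0.le key
      have h6 : M * (⟪z, u⟫ + -(1 / M) * ‖z‖ ^ 2 + (-(1 / M) * ‖z‖ ^ 2 +
          -(1 / M) * (-(1 / M) * ⟪B' z, z⟫)))
          = M * ⟪z, u⟫ - 2 * ‖z‖ ^ 2 + (1/M) * ⟪B' z, z⟫ := by
        field_simp
        ring
      rwa [h6] at h5
    have k2 : (1/M) * ⟪B' z, z⟫ ≤ ‖z‖ ^ 2 := by
      have h7 := mul_le_mul_of_nonneg_left hzz (by positivity : (0:ℝ) ≤ 1/M)
      have h8 : (1/M) * (M * ‖z‖ ^ 2) = ‖z‖ ^ 2 := by field_simp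
      linarith
    rw [← hz]
    linarith
  obtain ⟨ε, hε⟩ : ∃ ε : ℝ, ε = 1 / ((‖Cop‖ + 1) ^ 2 * M) := ⟨_, rfl⟩
  have hε0 : 0 < ε := by rw [hε]; positivity
  obtain ⟨s, hsS, hslt⟩ : ∃ s ∈ S, s < m + ε := by
    by_contra hc
    push_neg at hc
    have : m + ε ≤ m := by rw [hm]; exact le_csInf hne (by rw [← hm]; exact hc)
    linarith
  obtain ⟨u, hu1, hueq⟩ := hsS
  simp only [Set.mem_setOf_eq] at hu1
  have hueq' : ⟪B u, u⟫ = s := hueq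
  have htε : ⟪B' u, u⟫ < ε := by
    rw [hB'inner, hu1, hueq']
    norm_num
    linarith
  have ht0 : 0 ≤ ⟪B' u, u⟫ := hB'nonneg u
  have h1 : (1:ℝ) ≤ ‖Cop‖ * ‖B' u‖ := by
    have h2 : ‖Cop (B' u)‖ ≤ ‖Cop‖ * ‖B' u‖ := Cop.le_opNorm _
    rw [hCB u, hu1] at h2
    exact h2
  have h2 := genCS u
  have hC0 : (0:ℝ) ≤ ‖Cop‖ := norm_nonneg _
  have hBu0 : (0:ℝ) ≤ ‖B' u‖ := norm_nonneg _
  have hCne : ‖Cop‖ + 1 ≠ 0 := by positivity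
  have hfin : ((‖Cop‖ + 1) ^ 2 * M) * ε = 1 := by
    rw [hε]
    field_simp
  have s1 : (1:ℝ) ≤ ‖Cop‖ ^ 2 * ‖B' u‖ ^ 2 := by nlinarith
  have s2 : ‖Cop‖ ^ 2 * ‖B' u‖ ^ 2 ≤ ‖Cop‖ ^ 2 * (M * ⟪B' u, u⟫) :=
    mul_le_mul_of_nonneg_left h2 (by positivity)
  have s3 : ‖Cop‖ ^ 2 * (M * ⟪B' u, u⟫) ≤ (‖Cop‖ + 1) ^ 2 * (M * ⟪B' u, u⟫) :=
    mul_le_mul_of_nonneg_right (by nlinarith) (mul_nonneg hM0.le ht0)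
  have s4 : (‖Cop‖ + 1) ^ 2 * (M * ⟪B' u, u⟫) < (‖Cop‖ + 1) ^ 2 * (M * ε) := by
    have h9 := mul_lt_mul_of_pos_left htε hM0
    exact mul_lt_mul_of_pos_left h9 (by positivity)
  nlinarith [hfin, s1, s2, s3, s4]

set_option maxHeartbeats 1600000 in
lemma key_coercive {X : Type*} [NormedAddCommGroup X] [InnerProductSpace ℝ X]
    [CompleteSpace X] (T : X →L[ℝ] X) (hTc : IsCompactOperator T)
    (hT : IsSelfAdjoint T) {ν δ : ℝ} (hν : ν ≠ 0) (hδ : 0 < δ)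
    (hgap : ∀ z ∈ spectrum ℝ T, z ≠ ν → δ ≤ |z - ν|)
    {x : X} (hx : Module.End.HasEigenvector (T : X →ₗ[ℝ] X) ν x)
    (hsimple : Module.finrank ℝ (Module.End.eigenspace (T : X →ₗ[ℝ] X) ν) = 1) :
    ∀ w : X, ⟪x, w⟫ = 0 → δ * ‖w‖ ≤ ‖T w - ν • w‖ := by
  have hx0 : x ≠ 0 := hx.2
  have hTsym : ∀ u v : X, ⟪T u, v⟫ = ⟪u, T v⟫ := fun u v => hT.isSymmetric u v
  have hTx : T x = ν • x := by
    have := Module.End.mem_eigenspace_iff.mp hx.1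
    simpa using this
  -- the eigenspace is spanned by x
  have hEig : ∀ w : X, T w = ν • w → ⟪x, w⟫ = 0 → w = 0 := by
    intro w hTw hxw
    have hwmem : w ∈ Module.End.eigenspace (T : X →ₗ[ℝ] X) ν :=
      Module.End.mem_eigenspace_iff.mpr (by simpa using hTw)
    have hxne : (⟨x, hx.1⟩ : Module.End.eigenspace (T : X →ₗ[ℝ] X) ν) ≠ 0 := by
      simp only [ne_eq, Submodule.mk_eq_zero]
      exact hx0
    obtain ⟨c, hc⟩ := (finrank_eq_one_iff_of_nonzero' _ hxne).mp hsimple ⟨w, hwmem⟩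
    have hcoe : c • x = w := congrArg Subtype.val hc
    have : (0:ℝ) = c * (‖x‖ * ‖x‖) := by
      rw [← hxw, ← hcoe, real_inner_smul_right, real_inner_self_eq_norm_mul_norm]
    have hx2 : 0 < ‖x‖ * ‖x‖ := by
      have := norm_pos_iff.mpr hx0
      positivity
    have hc0 : c = 0 := by
      rcases mul_eq_zero.mp this.symm with h | h
      · exact h
      · exact absurd h (ne_of_gt hx2)
    rw [← hcoe, hc0, zero_smul]
  set W : Submodule ℝ X := (ℝ ∙ x)ᗮ with hWdef
  have hWmem : ∀ w : X, w ∈ W ↔ ⟪x, w⟫ = 0 := fun w =>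
    Submodule.mem_orthogonal_singleton_iff_inner_right
  haveI : CompleteSpace W := (Submodule.isClosed_orthogonal _).completeSpace_coe
  have hTW : ∀ w : X, w ∈ W → T w ∈ W := by
    intro w hw
    rw [hWmem] at hw ⊢
    rw [← hTsym, hTx, real_inner_smul_left, hw, mul_zero]
  set S : W →L[ℝ] W := W.orthogonalProjectionOnto ∘L (T ∘L W.subtypeL) with hSdef
  have hSapp : ∀ w : W, ((S w : W) : X) = T (w : X) := by
    intro w
    have : S w = W.orthogonalProjectionOnto (T (w : X)) := rfl
    rw [this]
    exact Submodule.starProjection_eq_self_iff.mpr (hTW _ w.2)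
  have hSsub : ∀ (μ : ℝ) (w : W), ((S w - μ • w : W) : X) = T (w : X) - μ • (w : X) := by
    intro μ w
    push_cast [hSapp]
    rfl
  have hSsym : ∀ u v : W, ⟪S u, v⟫ = ⟪u, S v⟫ := by
    intro u v
    rw [Submodule.coe_inner, Submodule.coe_inner, hSapp, hSapp, hTsym]
  -- bounded below of S - ν on W, via compactness
  have hbb : ∃ c > 0, ∀ w : W, c * ‖w‖ ≤ ‖S w - ν • w‖ := by
    by_contra hcon
    push_neg at hcon
    have hseq : ∀ n : ℕ, ∃ u : W, ‖u‖ = 1 ∧ ‖S u - ν • u‖ < 1/(n+1) := by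
      intro n
      obtain ⟨w, hw⟩ := hcon (1/(n+1)) (by positivity)
      have hw0 : w ≠ 0 := by
        rintro rfl
        simp at hw
      have hnw : 0 < ‖w‖ := norm_pos_iff.mpr hw0
      refine ⟨‖w‖⁻¹ • w, norm_smul_inv_norm hw0, ?_⟩
      have h1 : S (‖w‖⁻¹ • w) - ν • (‖w‖⁻¹ • w) = ‖w‖⁻¹ • (S w - ν • w) := by
        rw [map_smul, smul_sub, smul_comm]
      rw [h1, norm_smul, norm_inv, norm_norm]
      calc ‖w‖⁻¹ * ‖S w - ν • w‖ < ‖w‖⁻¹ * (1/(n+1) * ‖w‖) := by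
            exact mul_lt_mul_of_pos_left hw (by positivity)
        _ = 1/(n+1) := by
            rw [mul_comm, mul_assoc, mul_inv_cancel₀ (ne_of_gt hnw), mul_one]
    choose u hu1 hu2 using hseq
    set v : ℕ → X := fun n => ((u n : W) : X) with hvdef
    have hv1 : ∀ n, ‖v n‖ = 1 := fun n => hu1 n
    have hvW : ∀ n, v n ∈ W := fun n => (u n).2
    have hbdd : Bornology.IsBounded (Set.range v) := by
      apply Bornology.IsBounded.subset (Metric.isBounded_closedBall (x := (0:X)) (r := 1))
      rintro _ ⟨n, rfl⟩
      simp [Metric.mem_closedBall, hv1 n]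
    have hK : IsCompact (closure ((T : X →ₗ[ℝ] X) '' Set.range v)) :=
      IsCompactOperator.isCompact_closure_image_of_bounded (𝕜₁ := ℝ) hTc hbdd
    have hmemK : ∀ n, T (v n) ∈ closure ((T : X →ₗ[ℝ] X) '' Set.range v) :=
      fun n => subset_closure ⟨v n, ⟨n, rfl⟩, rfl⟩
    obtain ⟨z, _, φ, hφ, hconv⟩ := hK.tendsto_subseq hmemK
    have hres : ∀ n, ‖T (v n) - ν • v n‖ < 1/(n+1) := by
      intro n
      have heq : T (v n) - ν • v n = ((S (u n) - ν • u n : W) : X) := (hSsub ν (u n)).symm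
      rw [heq]
      exact hu2 n
    have hresto : Filter.Tendsto (fun n => T (v (φ n)) - ν • v (φ n)) Filter.atTop (nhds 0) := by
      rw [tendsto_zero_iff_norm_tendsto_zero]
      apply squeeze_zero (fun n => norm_nonneg _) (fun n => (hres (φ n)).le.trans ?_)
      · exact tendsto_one_div_add_atTop_nhds_zero_nat
      · have h0 : (n:ℝ) ≤ (φ n : ℝ) := Nat.cast_le.mpr hφ.le_apply
        apply one_div_le_one_div_of_le (by positivity) (by linarith)
    have hvconv : Filter.Tendsto (fun n => v (φ n)) Filter.atTop (nhds (ν⁻¹ • z)) := by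
      have h1 : Filter.Tendsto (fun n => T (v (φ n)) - (T (v (φ n)) - ν • v (φ n)))
          Filter.atTop (nhds (z - 0)) := hconv.sub hresto
      simp only [sub_sub_cancel, sub_zero] at h1
      have h2 := h1.const_smul ν⁻¹
      simpa [inv_smul_smul₀ hν] using h2
    set w₀ : X := ν⁻¹ • z with hw₀def
    have hw₀n : ‖w₀‖ = 1 := by
      have h1 : Filter.Tendsto (fun n => ‖v (φ n)‖) Filter.atTop (nhds ‖w₀‖) := hvconv.norm
      have h2 : Filter.Tendsto (fun n => ‖v (φ n)‖) Filter.atTop (nhds 1) := by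
        simpa [hv1] using tendsto_const_nhds (x := (1:ℝ)) (f := Filter.atTop (α := ℕ))
      exact tendsto_nhds_unique h1 h2
    have hw₀W : ⟪x, w₀⟫ = 0 := by
      have h1 : Filter.Tendsto (fun n => ⟪x, v (φ n)⟫) Filter.atTop (nhds ⟪x, w₀⟫) :=
        Filter.Tendsto.inner tendsto_const_nhds hvconv
      have h2 : Filter.Tendsto (fun n => ⟪x, v (φ n)⟫) Filter.atTop (nhds 0) := by
        have : ∀ n, ⟪x, v (φ n)⟫ = 0 := fun n => (hWmem _).mp (hvW (φ n))
        simpa [this] using tendsto_const_nhds (x := (0:ℝ)) (f := Filter.atTop (α := ℕ))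
      exact tendsto_nhds_unique h1 h2
    have hTw₀ : T w₀ = ν • w₀ := by
      have h1 : Filter.Tendsto (fun n => T (v (φ n))) Filter.atTop (nhds (T w₀)) :=
        (T.continuous.tendsto w₀).comp hvconv
      have h2 : Filter.Tendsto (fun n => T (v (φ n))) Filter.atTop (nhds (ν • w₀)) := by
        have h3 : Filter.Tendsto (fun n => (T (v (φ n)) - ν • v (φ n)) + ν • v (φ n))
            Filter.atTop (nhds (0 + ν • w₀)) := hresto.add (hvconv.const_smul ν)
        simpa using h3
      exact tendsto_nhds_unique h1 h2
    have := hEig w₀ hTw₀ hw₀W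
    rw [this, norm_zero] at hw₀n
    exact one_ne_zero hw₀n.symm
  obtain ⟨c₀, hc₀, hbb⟩ := hbb
  -- bounded below of S - μ for μ outside the spectrum of T
  have hgood : ∀ μ : ℝ, μ ≠ ν → |μ - ν| < δ → ∃ c > 0, ∀ w : W, c * ‖w‖ ≤ ‖S w - μ • w‖ := by
    intro μ hμν hμδ
    have hμspec : μ ∉ spectrum ℝ T := fun hmem => absurd (hgap μ hmem hμν) (not_le.mpr hμδ)
    rw [spectrum.notMem_iff] at hμspec
    obtain ⟨U, hU⟩ := hμspec
    refine ⟨(‖(↑U⁻¹ : X →L[ℝ] X)‖ + 1)⁻¹, by positivity, ?_⟩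
    intro w
    have h1 : (↑U⁻¹ * ↑U : X →L[ℝ] X) (w : X) = (w : X) := by rw [U.inv_mul]; rfl
    rw [ContinuousLinearMap.mul_apply, hU] at h1
    have h2 : ‖(w:X)‖ ≤ ‖(↑U⁻¹ : X →L[ℝ] X)‖ * ‖(algebraMap ℝ (X →L[ℝ] X) μ - T) (w:X)‖ := by
      conv_lhs => rw [← h1]
      exact (↑U⁻¹ : X →L[ℝ] X).le_opNorm _
    have h3 : (algebraMap ℝ (X →L[ℝ] X) μ - T) (w:X) = μ • (w:X) - T (w:X) := by
      rw [Algebra.algebraMap_eq_smul_one]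
      simp [ContinuousLinearMap.sub_apply]
    have h4 : ‖S w - μ • w‖ = ‖T (w:X) - μ • (w:X)‖ := by
      rw [← hSsub μ w]
      rfl
    rw [h3] at h2
    rw [norm_sub_rev] at h2
    rw [h4]
    rw [inv_mul_le_iff₀ (by positivity)]
    calc ‖(w:X)‖ ≤ ‖(↑U⁻¹ : X →L[ℝ] X)‖ * ‖T (w:X) - μ • (w:X)‖ := h2
      _ ≤ (‖(↑U⁻¹ : X →L[ℝ] X)‖ + 1) * ‖T (w:X) - μ • (w:X)‖ := by
          apply mul_le_mul_of_nonneg_right (by linarith) (norm_nonneg _)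
  -- the operator D = S - ν•1 and B = D*D - δ²•1 on W
  set D : W →L[ℝ] W := S - ν • 1 with hDdef
  have hDapp : ∀ w : W, D w = S w - ν • w := by
    intro w
    simp [hDdef, ContinuousLinearMap.sub_apply, ContinuousLinearMap.smul_apply,
      ContinuousLinearMap.one_apply]
  have hDsym : ∀ u v : W, ⟪D u, v⟫ = ⟪u, D v⟫ := by
    intro u v
    simp only [hDapp, inner_sub_left, inner_sub_right, real_inner_smul_left,
      real_inner_smul_right, hSsym]
  have hDbb : ∀ w : W, c₀ * ‖w‖ ≤ ‖D w‖ := by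
    intro w
    rw [hDapp]
    exact hbb w
  set BW : W →L[ℝ] W := D * D - (δ^2) • 1 with hBWdef
  have hBWapp : ∀ w : W, BW w = D (D w) - δ^2 • w := by
    intro w
    simp [hBWdef, ContinuousLinearMap.sub_apply, ContinuousLinearMap.smul_apply,
      ContinuousLinearMap.mul_apply, ContinuousLinearMap.one_apply]
  have hBWsym : ∀ u v : W, ⟪BW u, v⟫ = ⟪u, BW v⟫ := by
    intro u v
    simp only [hBWapp, inner_sub_left, inner_sub_right, real_inner_smul_left,
      real_inner_smul_right, hDsym]
  -- spectrum of BW is nonnegative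
  have hBWspec : ∀ t ∈ spectrum ℝ BW, 0 ≤ t := by
    intro t ht
    by_contra ht0
    push_neg at ht0
    apply absurd ht
    rw [spectrum.notMem_iff]
    set s : ℝ := δ^2 + t with hsdef
    have hsδ : s < δ^2 := by simp [hsdef]; linarith
    set A : W →L[ℝ] W := D * D - s • 1 with hAdef
    have hAapp : ∀ w : W, A w = D (D w) - s • w := by
      intro w
      simp [hAdef, ContinuousLinearMap.sub_apply, ContinuousLinearMap.smul_apply,
        ContinuousLinearMap.mul_apply, ContinuousLinearMap.one_apply]
    have hAsym : ∀ u v : W, ⟪A u, v⟫ = ⟪u, A v⟫ := by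
      intro u v
      simp only [hAapp, inner_sub_left, inner_sub_right, real_inner_smul_left,
        real_inner_smul_right, hDsym]
    have heq : algebraMap ℝ (W →L[ℝ] W) t - BW = -A := by
      ext w
      simp only [ContinuousLinearMap.sub_apply, ContinuousLinearMap.neg_apply,
        Algebra.algebraMap_eq_smul_one, ContinuousLinearMap.smul_apply,
        ContinuousLinearMap.one_apply, hBWapp, hAapp, hsdef, add_smul]
      push_cast
      module
    rw [heq]
    have hAinner : ∀ w : W, ⟪A w, w⟫ = ‖D w‖^2 - s * ‖w‖^2 := by
      intro w
      rw [hAapp, inner_sub_left, real_inner_smul_left, real_inner_self_eq_norm_sq]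
      congr 1
      rw [hDsym, real_inner_self_eq_norm_sq]
    have hAunit : IsUnit A := by
      rcases lt_trichotomy s 0 with hs | hs | hs
      · -- coercive case
        refine isUnit_of_symmetric_boundedBelow hAsym (c := -s) (by linarith) ?_
        intro w
        have h5 : (-s) * ‖w‖^2 ≤ ⟪A w, w⟫ := by
          rw [hAinner]
          nlinarith [sq_nonneg ‖D w‖]
        have h6 : ⟪A w, w⟫ ≤ ‖A w‖ * ‖w‖ := real_inner_le_norm _ _
        rcases eq_or_lt_of_le (norm_nonneg w) with hw0 | hw0
        · rw [← hw0, mul_zero]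
          exact norm_nonneg _
        · nlinarith
      · -- s = 0 : A = D²
        refine isUnit_of_symmetric_boundedBelow hAsym (c := c₀ * c₀)
          (mul_pos hc₀ hc₀) ?_
        intro w
        have h5 : A w = D (D w) := by rw [hAapp, hs]; simp
        rw [h5]
        calc c₀ * c₀ * ‖w‖ ≤ c₀ * ‖D w‖ := by
              have := hDbb w
              nlinarith
          _ ≤ ‖D (D w)‖ := hDbb (D w)
      · -- 0 < s < δ² : factor
        obtain ⟨r, hr0, hrs⟩ : ∃ r : ℝ, 0 < r ∧ r^2 = s :=
          ⟨Real.sqrt s, Real.sqrt_pos.mpr hs, Real.sq_sqrt hs.le⟩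
        have hrδ : r < δ := by nlinarith
        obtain ⟨cp, hcp0, hcp⟩ := hgood (ν + r) (by intro h; nlinarith) (by
          rw [show ν + r - ν = r by ring, abs_of_pos hr0]; exact hrδ)
        obtain ⟨cm, hcm0, hcm⟩ := hgood (ν - r) (by intro h; nlinarith) (by
          rw [show ν - r - ν = -r by ring, abs_neg, abs_of_pos hr0]; exact hrδ)
        refine isUnit_of_symmetric_boundedBelow hAsym (c := cp * cm)
          (mul_pos hcp0 hcm0) ?_
        intro w
        have hfact : A w = S (S w - (ν - r) • w) - (ν + r) • (S w - (ν - r) • w) := by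
          simp only [hAapp, hDapp, map_sub, map_smul, ← hrs]
          module
        rw [hfact]
        calc cp * cm * ‖w‖ ≤ cp * ‖S w - (ν - r) • w‖ := by
              have := hcm w
              nlinarith
          _ ≤ ‖S (S w - (ν - r) • w) - (ν + r) • (S w - (ν - r) • w)‖ :=
              hcp (S w - (ν - r) • w)
    exact hAunit.neg
  have hpos := inner_nonneg_of_spectrum_nonneg hBWsym hBWspec
  intro w hw
  set w' : W := ⟨w, (hWmem w).mpr hw⟩ with hw'def
  have h1 : 0 ≤ ⟪BW w', w'⟫ := hpos w'
  have h2 : ⟪BW w', w'⟫ = ‖D w'‖^2 - δ^2 * ‖w'‖^2 := by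
    rw [hBWapp, inner_sub_left, real_inner_smul_left, real_inner_self_eq_norm_sq]
    congr 1
    rw [hDsym, real_inner_self_eq_norm_sq]
  have h3 : δ^2 * ‖w'‖^2 ≤ ‖D w'‖^2 := by rw [h2] at h1; linarith
  have h4 : ‖D w'‖ = ‖T w - ν • w‖ := by
    rw [hDapp, ← hSsub ν w']
    rfl
  have h5 : ‖w'‖ = ‖w‖ := rfl
  rw [h4, h5] at h3
  nlinarith [norm_nonneg (T w - ν • w), norm_nonneg w, mul_nonneg hδ.le (norm_nonneg w)]


set_option maxHeartbeats 1600000 in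
/-- quantitative eigenfunction estimate: for compact self-adjoint
operators `T, T_h` on a Hilbert space, a simple nonzero eigenvalue `ν` of `T` with
spectral gap `δ`, and `‖T − T_h‖ < δ/4`, any unit eigenvector `x_h` of `T_h` for a
simple eigenvalue `ν_h` near `ν` satisfies, for a suitable sign,
`‖x ∓ x_h‖ ≤ C‖(T − T_h)x‖`, with `C` depending only on `δ`. -/
theorem stmt_13 (δ : ℝ) (hδ : 0 < δ) :
    ∃ C > (0 : ℝ),
      ∀ (X : Type) [NormedAddCommGroup X] [InnerProductSpace ℝ X] [CompleteSpace X],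
      ∀ (T Th : X →L[ℝ] X),
        IsCompactOperator T → IsCompactOperator Th →
        IsSelfAdjoint T → IsSelfAdjoint Th →
        ∀ (ν νh : ℝ) (x xh : X),
          ν ≠ 0 →
          ν ∈ spectrum ℝ T →
          (∀ z ∈ spectrum ℝ T, z ≠ ν → δ ≤ |z - ν|) →
          Module.finrank ℝ (Module.End.eigenspace (T : X →ₗ[ℝ] X) ν) = 1 →
          ‖T - Th‖ < δ / 4 →
          |νh - ν| < δ / 2 →
          Module.finrank ℝ (Module.End.eigenspace (Th : X →ₗ[ℝ] X) νh) = 1 →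
          Module.End.HasEigenvector (T : X →ₗ[ℝ] X) ν x → ‖x‖ = 1 →
          Module.End.HasEigenvector (Th : X →ₗ[ℝ] X) νh xh → ‖xh‖ = 1 →
          (‖x - xh‖ ≤ C * ‖(T - Th) x‖ ∨ ‖x + xh‖ ≤ C * ‖(T - Th) x‖) := by
  refine ⟨6 / δ, by positivity, ?_⟩
  intro X _ _ _ T Th hTc hThc hT hTh ν νh x xh hν hνspec hgap hsimple hnorm hνh hsimpleh
    hx hx1 hxh hxh1
  have key := key_coercive T hTc hT hν hδ hgap hx hsimple
  have hTx : T x = ν • x := by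
    have := Module.End.mem_eigenspace_iff.mp hx.1
    simpa using this
  have hThxh : Th xh = νh • xh := by
    have := Module.End.mem_eigenspace_iff.mp hxh.1
    simpa using this
  have hThsym : ∀ u v : X, ⟪Th u, v⟫ = ⟪u, Th v⟫ := fun u v => hTh.isSymmetric u v
  set ε : ℝ := ‖(T - Th) x‖ with hεdef
  have hε0 : 0 ≤ ε := norm_nonneg _
  set a : ℝ := ⟪x, xh⟫ with hadef
  have hax : ⟪xh, x⟫ = a := (real_inner_comm xh x).symm.trans hadef.symm
  have hxx : ⟪x, x⟫ = 1 := by rw [real_inner_self_eq_norm_sq, hx1]; norm_num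
  have hxhxh : ⟪xh, xh⟫ = 1 := by rw [real_inner_self_eq_norm_sq, hxh1]; norm_num
  have ha1 : |a| ≤ 1 := by
    have := abs_real_inner_le_norm x xh
    rwa [hx1, hxh1, mul_one] at this
  -- Step 1: |a| is bounded below
  have hty : ⟪x, xh - a • x⟫ = 0 := by
    rw [inner_sub_right, real_inner_smul_right, hxx, ← hadef]
    ring
  have htynorm : ‖xh - a • x‖ ^ 2 = 1 - a ^ 2 := by
    rw [norm_sub_sq_real, real_inner_smul_right, norm_smul, hx1, hxh1, Real.norm_eq_abs, hax]
    rw [mul_one]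
    rw [sq_abs]
    ring
  have hid1 : T (xh - a • x) - ν • (xh - a • x) = ((T - Th) xh) + (νh - ν) • xh := by
    simp only [map_sub, map_smul, hTx, ContinuousLinearMap.sub_apply, hThxh, smul_sub,
      sub_smul, smul_smul]
    module
  have hstep1 : δ * ‖xh - a • x‖ ≤ δ * (3/4) := by
    calc δ * ‖xh - a • x‖ ≤ ‖T (xh - a • x) - ν • (xh - a • x)‖ := key _ hty
      _ = ‖((T - Th) xh) + (νh - ν) • xh‖ := by rw [hid1]
      _ ≤ ‖(T - Th) xh‖ + ‖(νh - ν) • xh‖ := norm_add_le _ _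
      _ ≤ ‖T - Th‖ * ‖xh‖ + |νh - ν| * ‖xh‖ := by
          apply add_le_add ((T - Th).le_opNorm xh)
          rw [norm_smul, Real.norm_eq_abs]
      _ ≤ δ/4 * 1 + δ/2 * 1 := by
          rw [hxh1]
          apply add_le_add (le_of_lt ?_) (le_of_lt ?_) <;> simpa using by linarith
      _ = δ * (3/4) := by ring
  have hty34 : ‖xh - a • x‖ ≤ 3/4 := le_of_mul_le_mul_left hstep1 hδ
  have ha2 : 7/16 ≤ a ^ 2 := by nlinarith [norm_nonneg (xh - a • x)]
  -- Step 2: bound on y = x - a xh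
  set y : X := x - a • xh with hydef
  have hyorth : ⟪xh, y⟫ = 0 := by
    rw [hydef, inner_sub_right, real_inner_smul_right, hax, hxhxh]
    ring
  have hyorth' : ⟪y, xh⟫ = 0 := (real_inner_comm xh y).trans hyorth
  have hynorm : ‖y‖ ^ 2 = 1 - a ^ 2 := by
    rw [hydef, norm_sub_sq_real, real_inner_smul_right, norm_smul, hx1, hxh1,
      Real.norm_eq_abs, ← hadef, mul_one, sq_abs]
    ring
  have hxy : ⟪x, y⟫ = 1 - a ^ 2 := by
    rw [hydef, inner_sub_right, real_inner_smul_right, hxx, ← hadef]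
    ring
  set y' : X := y - (1 - a ^ 2) • x with hy'def
  have hy'orth : ⟪x, y'⟫ = 0 := by
    rw [hy'def, inner_sub_right, real_inner_smul_right, hxx, hxy]
    ring
  have hyx : ⟪y, x⟫ = 1 - a ^ 2 := (real_inner_comm x y).trans hxy
  have hy'norm : ‖y'‖ ^ 2 = a ^ 2 * ‖y‖ ^ 2 := by
    rw [hy'def, norm_sub_sq_real, real_inner_smul_right, norm_smul, hx1,
      Real.norm_eq_abs, hyx, mul_one, sq_abs, hynorm]
    ring
  have hy'ge : (1/2) * ‖y‖ ≤ ‖y'‖ := by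
    nlinarith [norm_nonneg y, norm_nonneg y', sq_nonneg (‖y'‖ - (1/2) * ‖y‖),
      sq_nonneg ‖y‖]
  have hid2 : T y - ν • y = T y' - ν • y' := by
    simp only [hy'def, map_sub, map_smul, hTx]
    module
  have hTylower : δ/2 * ‖y‖ ≤ ‖T y - ν • y‖ := by
    calc δ/2 * ‖y‖ = δ * ((1/2) * ‖y‖) := by ring
      _ ≤ δ * ‖y'‖ := by apply mul_le_mul_of_nonneg_left hy'ge hδ.le
      _ ≤ ‖T y' - ν • y'‖ := key _ hy'orth
      _ = ‖T y - ν • y‖ := by rw [hid2]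
  have hTmThy : ‖(T - Th) y‖ ≤ δ/4 * ‖y‖ := by
    calc ‖(T - Th) y‖ ≤ ‖T - Th‖ * ‖y‖ := (T - Th).le_opNorm y
      _ ≤ δ/4 * ‖y‖ := mul_le_mul_of_nonneg_right hnorm.le (norm_nonneg y)
  have hThylower : δ/4 * ‖y‖ ≤ ‖Th y - ν • y‖ := by
    have htri : ‖T y - ν • y‖ ≤ ‖Th y - ν • y‖ + ‖(T - Th) y‖ := by
      have : T y - ν • y = (Th y - ν • y) + (T - Th) y := by
        simp only [ContinuousLinearMap.sub_apply]
        module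
      rw [this]
      exact norm_add_le _ _
    linarith
  -- upper bound for ‖Th y - ν y‖
  have hid3 : Th y - ν • y = ((Th - T) x) + ((ν - νh) * a) • xh := by
    rw [hydef]
    simp only [map_sub, map_smul, hThxh, ContinuousLinearMap.sub_apply, smul_sub,
      sub_smul, smul_smul, hTx]
    module
  have horth3 : ⟪Th y - ν • y, xh⟫ = 0 := by
    rw [inner_sub_left, hThsym, hThxh, real_inner_smul_right, real_inner_smul_left,
      hyorth']
    ring
  have hupper : ‖Th y - ν • y‖ ≤ ε := by
    have h6 : ‖Th y - ν • y‖ ^ 2 = ⟪Th y - ν • y, (Th - T) x⟫ := by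
      calc ‖Th y - ν • y‖ ^ 2 = ⟪Th y - ν • y, Th y - ν • y⟫ :=
            (real_inner_self_eq_norm_sq _).symm
        _ = ⟪Th y - ν • y, ((Th - T) x) + ((ν - νh) * a) • xh⟫ := by rw [← hid3]
        _ = ⟪Th y - ν • y, (Th - T) x⟫ + ((ν - νh) * a) * ⟪Th y - ν • y, xh⟫ := by
            rw [inner_add_right, real_inner_smul_right]
        _ = ⟪Th y - ν • y, (Th - T) x⟫ := by rw [horth3]; ring
    have h7 : ⟪Th y - ν • y, (Th - T) x⟫ ≤ ‖Th y - ν • y‖ * ε := by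
      calc ⟪Th y - ν • y, (Th - T) x⟫ ≤ ‖Th y - ν • y‖ * ‖(Th - T) x‖ :=
            real_inner_le_norm _ _
        _ = ‖Th y - ν • y‖ * ε := by
            rw [hεdef]
            congr 1
            rw [show (Th - T) x = -((T - Th) x) by simp [ContinuousLinearMap.sub_apply],
              norm_neg]
    nlinarith [norm_nonneg (Th y - ν • y)]
  have hybound' : δ * ‖y‖ ≤ 4 * ε := by
    have := le_trans hThylower hupper
    linarith
  -- Step 3: conclude
  have hfinal : ∀ b : X, ‖b‖ ^ 2 ≤ 2 * ‖y‖ ^ 2 → ‖b‖ ≤ 6/δ * ‖(T - Th) x‖ := by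
    intro b hb
    rw [← hεdef]
    have hsuff : δ * ‖b‖ ≤ 6 * ε → ‖b‖ ≤ 6/δ * ε := by
      intro h
      rw [div_mul_eq_mul_div, le_div_iff₀ hδ]
      linarith
    apply hsuff
    have h1 : (δ * ‖y‖) ^ 2 ≤ (4 * ε) ^ 2 :=
      pow_le_pow_left₀ (mul_nonneg hδ.le (norm_nonneg y)) hybound' 2
    have hsq : (δ * ‖b‖) ^ 2 ≤ 32 * ε ^ 2 := by
      have h2 := mul_le_mul_of_nonneg_left hb (sq_nonneg δ)
      nlinarith
    nlinarith [mul_nonneg hδ.le (norm_nonneg b), hε0, sq_nonneg ε]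
  rcases le_or_gt 0 a with ha | ha
  · left
    apply hfinal
    have h11 : ‖x - xh‖ ^ 2 = 2 - 2 * a := by
      rw [norm_sub_sq_real, hx1, hxh1, ← hadef]
      ring
    rw [h11, hynorm]
    nlinarith [abs_le.mp ha1]
  · right
    apply hfinal
    have h11 : ‖x + xh‖ ^ 2 = 2 + 2 * a := by
      rw [norm_add_sq_real, hx1, hxh1, ← hadef]
      ring
    rw [h11, hynorm]
    nlinarith [abs_le.mp ha1]
end
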